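/- arXiv:1711.03011 — 2 statements merged into one kernel-verified Lean document; each statement's English description precedes it below -/
import Mathlib

section
/- Let f : (0,1) → ℝ be a nondecreasing step function with finitely many values, and 0 ≤ u < v ≤ 1 (interpreting f at endpoints via one-sided limits). With h^u_ε the normalized indicators h^u_ε = ε⁻¹𝟙_{[u,u+ε)} (suitably truncated at the boundary), one has (pr_f h^u_ε, pr_f h^v_ε)_{L²} → (1/m_f(u)) 𝟙_{f(u)=f(v)} as ε → 0+, where m_f(u) = leb{r : f(r) = f(u)}. -/
/-
For ε small, `h^v_ε` is `ε⁻¹` times the indicator of an interval of length `ε` lying (up to a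
null set) in the level set of `v`: this uses right continuity at `v` (left continuity at `1`)
together with the finiteness of the range, which makes `f` locally constant from that side.
Averaging over level sets therefore sends `h^v_ε` to `m_f(v)⁻¹ 𝟙_{f = f(v)}` on `(0,1)`, every
level set there having positive measure. The inner product is thus eventually constant, equal
to `m_f(u) · m_f(u)⁻²` or `0` according to whether the level sets of `u` and `v` coincide.
-/

open MeasureTheory Set Filter

noncomputable section

/-- The level set of `f` through `w`, inside `(0,1)`. -/
def levelSet (f : ℝ → ℝ) (w : ℝ) : Set ℝ := {r ∈ Set.Ioo (0:ℝ) 1 | f r = f w}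

open Classical in
/-- The orthogonal projection `pr_f h` onto `σ(f)`-measurable functions, given by
averaging `h` over the level intervals of `f` (for step functions `f`). -/
def projFun (f h : ℝ → ℝ) (w : ℝ) : ℝ :=
  if 0 < volume (levelSet f w) then
    (∫ r in levelSet f w, h r) / (volume (levelSet f w)).toReal
  else h w

/-- The normalized indicator kernels `h^u_ε` (truncated at the boundary; at `u = 1`
the left-sided version is used). -/
def happrox (u ε : ℝ) : ℝ → ℝ := fun v =>
  if u < 1 then Set.indicator (Set.Ico u (min (u + ε) 1)) (fun _ => 1 / min ε (1 - u)) v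
  else Set.indicator (Set.Icc (max (1 - ε) 0) 1) (fun _ => 1 / min ε 1) v

open Topology

lemma ContinuousWithinAt.eventually_eq_of_finite_image {X Y : Type*} [TopologicalSpace X]
    [TopologicalSpace Y] [T1Space Y] {f : X → Y} {s t : Set X} {a : X}
    (hf : ContinuousWithinAt f s a) (ht : t ∈ 𝓝[s] a) (hfin : (f '' t).Finite) :
    ∀ᶠ x in 𝓝[s] a, f x = f a := by
  have hopen : IsOpen (f '' t \ {f a})ᶜ := hfin.sdiff.isClosed.isOpen_compl
  filter_upwards [ht, hf (hopen.mem_nhds (by simp))] with x hxt hx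
  by_contra hne
  exact hx ⟨mem_image_of_mem f hxt, hne⟩

section LevelSet

variable {f : ℝ → ℝ}

lemma levelSet_subset_Ioo (w : ℝ) : levelSet f w ⊆ Ioo 0 1 := fun _ hr => hr.1

lemma levelSet_eq_of_eq {w w' : ℝ} (h : f w = f w') : levelSet f w = levelSet f w' := by
  rw [levelSet, levelSet, h]

lemma measurableSet_levelSet (hmono : MonotoneOn f (Icc 0 1)) (w : ℝ) :
    MeasurableSet (levelSet f w) := by
  obtain ⟨s, hs, hlevel⟩ :=
    (ordConnected_singleton (a := f w)).preimage_monotoneOn (hmono.mono Ioo_subset_Icc_self)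
  change MeasurableSet (Ioo 0 1 ∩ f ⁻¹' {f w})
  rw [hlevel]
  exact measurableSet_Ioo.inter hs.measurableSet

lemma exists_Ioo_subset_levelSet_right {w : ℝ} (hw : w ∈ Ico 0 1)
    (hright : ContinuousWithinAt f (Ici w) w) (hfin : (f '' Icc 0 1).Finite) :
    ∃ δ > 0, Ioo w (w + δ) ⊆ levelSet f w := by
  have hconst : ∀ᶠ r in 𝓝[>] w, f r = f w :=
    nhdsWithin_mono w Ioi_subset_Ici_self <|
      hright.eventually_eq_of_finite_image (Icc_mem_nhdsGE_of_mem hw) hfin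
  have hmem : levelSet f w ∈ 𝓝[>] w := by
    filter_upwards [hconst, Ioo_mem_nhdsGT hw.2] with r hr hr'
    exact ⟨⟨hw.1.trans_lt hr'.1, hr'.2⟩, hr⟩
  obtain ⟨b, hb, hsub⟩ := mem_nhdsGT_iff_exists_Ioo_subset.1 hmem
  exact ⟨b - w, sub_pos.2 hb, by rwa [add_sub_cancel]⟩

lemma exists_Ioo_subset_levelSet_one (hleft : ContinuousWithinAt f (Iic 1) 1)
    (hfin : (f '' Icc 0 1).Finite) :
    ∃ δ > 0, Ioo (1 - δ) 1 ⊆ levelSet f 1 := by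
  have hconst : ∀ᶠ r in 𝓝[<] 1, f r = f 1 :=
    nhdsWithin_mono 1 Iio_subset_Iic_self <|
      hleft.eventually_eq_of_finite_image (Icc_mem_nhdsLE zero_lt_one) hfin
  have hmem : levelSet f 1 ∈ 𝓝[<] 1 := by
    filter_upwards [hconst, Ioo_mem_nhdsLT zero_lt_one] with r hr hr'
    exact ⟨hr', hr⟩
  obtain ⟨a, ha, hsub⟩ := mem_nhdsLT_iff_exists_Ioo_subset.1 hmem
  exact ⟨1 - a, sub_pos.2 ha, by rwa [sub_sub_cancel]⟩

lemma volume_levelSet_pos {w : ℝ} (hw : w ∈ Ico 0 1)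
    (hright : ContinuousWithinAt f (Ici w) w) (hfin : (f '' Icc 0 1).Finite) :
    0 < volume (levelSet f w) := by
  obtain ⟨δ, hδ, hsub⟩ := exists_Ioo_subset_levelSet_right hw hright hfin
  calc 0 < volume (Ioo w (w + δ)) := by simpa using hδ
    _ ≤ volume (levelSet f w) := measure_mono hsub

lemma volume_inter_levelSet {I : Set ℝ} {a : ℝ} (hI : I ≤ᵐ[volume] levelSet f a) (w : ℝ) :
    volume (I ∩ levelSet f w) = if f w = f a then volume I else 0 := by
  split_ifs with hw
  · rw [levelSet_eq_of_eq hw]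
    exact measure_inter_conull' (ae_le_set.1 hI)
  · refine measure_mono_null (fun r hr => ?_) (ae_le_set.1 hI)
    exact ⟨hr.1, fun hra => hw (hr.2.2.symm.trans hra.2)⟩

lemma projFun_indicator {I : Set ℝ} {a w : ℝ} (hImeas : MeasurableSet I)
    (hI : I ≤ᵐ[volume] levelSet f a) (hw : 0 < volume (levelSet f w)) (c : ℝ) :
    projFun f (I.indicator fun _ => c) w
      = if f w = f a then (volume I).toReal * c / (volume (levelSet f a)).toReal else 0 := by
  rw [projFun, if_pos hw, integral_indicator hImeas, Measure.restrict_restrict hImeas,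
    setIntegral_const, smul_eq_mul, Measure.real, volume_inter_levelSet hI]
  split_ifs with hfw
  · rw [levelSet_eq_of_eq hfw]
  · simp

lemma setIntegral_ite_levelSet (hmono : MonotoneOn f (Icc 0 1)) (a c : ℝ) :
    ∫ w in Ioo 0 1, (if f w = f a then c else 0) = (volume (levelSet f a)).toReal * c := by
  have hmeas := measurableSet_levelSet hmono a
  rw [setIntegral_congr_fun measurableSet_Ioo (g := (levelSet f a).indicator fun _ => c)
      fun w hw => by simp [indicator, levelSet, hw.1, hw.2],
    integral_indicator hmeas, Measure.restrict_restrict hmeas,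
    inter_eq_left.2 (levelSet_subset_Ioo a), setIntegral_const, smul_eq_mul, Measure.real]

lemma setIntegral_ite_mul_ite_levelSet (hmono : MonotoneOn f (Icc 0 1)) (a b : ℝ) :
    ∫ w in Ioo 0 1, (if f w = f a then 1 / (volume (levelSet f a)).toReal else 0)
        * (if f w = f b then 1 / (volume (levelSet f b)).toReal else 0)
      = if f a = f b then 1 / (volume (levelSet f a)).toReal else 0 := by
  split_ifs with hab
  · rw [← levelSet_eq_of_eq hab]
    simp_rw [← hab, ite_zero_mul_ite_zero, and_self]
    rw [setIntegral_ite_levelSet hmono]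
    -- `m * (m⁻¹ * m⁻¹) = m⁻¹` also holds for `m = 0`, as `0⁻¹ = 0`.
    simpa [mul_assoc] using inv_mul_mul_self (volume (levelSet f a)).toReal⁻¹
  · have hzero : ∀ w, (if f w = f a then 1 / (volume (levelSet f a)).toReal else 0)
        * (if f w = f b then 1 / (volume (levelSet f b)).toReal else 0) = 0 := by
      intro w
      split_ifs with ha hb <;> first | exact absurd (ha.symm.trans hb) hab | simp
    simp only [hzero, integral_zero]

end LevelSet

lemma happrox_of_lt_one {u ε : ℝ} (hu : u < 1) (hε : ε ≤ 1 - u) :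
    happrox u ε = (Ico u (u + ε)).indicator fun _ => 1 / ε := by
  ext r
  rw [happrox, if_pos hu, min_eq_left (by linarith), min_eq_left hε]

lemma happrox_one {ε : ℝ} (hε : ε ≤ 1) :
    happrox 1 ε = (Icc (1 - ε) 1).indicator fun _ => 1 / ε := by
  ext r
  rw [happrox, if_neg (lt_irrefl 1), max_eq_left (by linarith), min_eq_left hε]

lemma eventually_happrox_eq_indicator {f : ℝ → ℝ}
    (hright : ∀ u ∈ Ico (0:ℝ) 1, ContinuousWithinAt f (Ici u) u)
    (hleft : ContinuousWithinAt f (Iic 1) 1) (hfin : (f '' Icc 0 1).Finite)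
    {v : ℝ} (hv : v ∈ Icc 0 1) :
    ∀ᶠ ε in 𝓝[>] 0, ∃ I : Set ℝ, MeasurableSet I ∧ I ≤ᵐ[volume] levelSet f v ∧
      (volume I).toReal = ε ∧ happrox v ε = I.indicator fun _ => 1 / ε := by
  rcases hv.2.lt_or_eq with hv1 | rfl
  · obtain ⟨δ, hδ, hsub⟩ :=
      exists_Ioo_subset_levelSet_right ⟨hv.1, hv1⟩ (hright v ⟨hv.1, hv1⟩) hfin
    filter_upwards [Ioo_mem_nhdsGT (lt_min hδ (sub_pos.2 hv1))] with ε hε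
    refine ⟨Ico v (v + ε), measurableSet_Ico, ?_, by simp [hε.1.le], happrox_of_lt_one hv1 ?_⟩
    · have hεδ : v + ε ≤ v + δ := by linarith [hε.2.trans_le (min_le_left _ _)]
      exact Ioo_ae_eq_Ico.symm.le.trans ((Ioo_subset_Ioo_right hεδ).trans hsub).eventuallyLE
    · exact hε.2.le.trans (min_le_right _ _)
  · obtain ⟨δ, hδ, hsub⟩ := exists_Ioo_subset_levelSet_one hleft hfin
    filter_upwards [Ioo_mem_nhdsGT (lt_min hδ zero_lt_one)] with ε hε
    refine ⟨Icc (1 - ε) 1, measurableSet_Icc, ?_, by simp [hε.1.le], happrox_one ?_⟩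
    · have hεδ : 1 - δ ≤ 1 - ε := by linarith [hε.2.trans_le (min_le_left _ _)]
      exact Ioo_ae_eq_Icc.symm.le.trans ((Ioo_subset_Ioo_left hεδ).trans hsub).eventuallyLE
    · exact hε.2.le.trans (min_le_right _ _)

lemma eventually_projFun_happrox {f : ℝ → ℝ}
    (hright : ∀ u ∈ Ico (0:ℝ) 1, ContinuousWithinAt f (Ici u) u)
    (hleft : ContinuousWithinAt f (Iic 1) 1) (hfin : (f '' Icc 0 1).Finite)
    {v : ℝ} (hv : v ∈ Icc 0 1) :
    ∀ᶠ ε in 𝓝[>] 0, ∀ w ∈ Ioo (0:ℝ) 1,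
      projFun f (happrox v ε) w = if f w = f v then 1 / (volume (levelSet f v)).toReal else 0 := by
  filter_upwards [eventually_happrox_eq_indicator hright hleft hfin hv, self_mem_nhdsWithin]
    with ε ⟨I, hImeas, hI, hvol, hε⟩ (hεpos : 0 < ε) w hw
  have hw' := Ioo_subset_Ico_self hw
  have hpos := volume_levelSet_pos hw' (hright w hw') hfin
  rw [hε, projFun_indicator hImeas hI hpos, hvol, mul_one_div_cancel hεpos.ne']

/-- for a nondecreasing step function `f` with finitely many values and
`0 ≤ u < v ≤ 1`, one has
`(pr_f h^u_ε, pr_f h^v_ε)_{L²} → (1/m_f(u)) 𝟙_{f(u)=f(v)}` as `ε → 0+`, where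
`m_f(u) = leb{r : f r = f u}`. -/
theorem stmt9 (f : ℝ → ℝ)
    (hmono : MonotoneOn f (Set.Icc (0:ℝ) 1))
    (hright : ∀ u ∈ Set.Ico (0:ℝ) 1, ContinuousWithinAt f (Set.Ici u) u)
    (hleft1 : ContinuousWithinAt f (Set.Iic (1:ℝ)) 1)
    (hfin : (f '' Set.Icc (0:ℝ) 1).Finite)
    (u v : ℝ) (hu : 0 ≤ u) (huv : u < v) (hv : v ≤ 1) :
    Tendsto
      (fun ε => ∫ w in Set.Ioo (0:ℝ) 1, projFun f (happrox u ε) w * projFun f (happrox v ε) w)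
      (nhdsWithin 0 (Set.Ioi (0:ℝ)))
      (nhds (if f u = f v then 1 / (volume (levelSet f u)).toReal else 0)) := by
  refine tendsto_const_nhds.congr' ?_
  filter_upwards [eventually_projFun_happrox hright hleft1 hfin ⟨hu, huv.le.trans hv⟩,
    eventually_projFun_happrox hright hleft1 hfin ⟨hu.trans huv.le, hv⟩] with ε hεu hεv
  rw [setIntegral_congr_fun measurableSet_Ioo fun w hw => by rw [hεu w hw, hεv w hw]]
  exact (setIntegral_ite_mul_ite_levelSet hmono u v).symm
end
end

section
/- Let f, f_n ∈ C([0,T], L₂↑) with projections P_t = pr_{f_t} and Pⁿ_t = pr_{fⁿ_t}. Assume: (a) Pⁿ → P^∞ weakly in L²([0,T], HS(L²)); (b) for almost every t ∈ [0,T] and all h ∈ L², ‖P_t h‖ ≤ liminf_n ‖Pⁿ_t h‖; (c) for every h ∈ L² and almost all t, P^∞_t(P_t h) = P^∞_t h. Then P^∞ = P in L²([0,T], HS(L²)). -/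
/-!
Testing the weak convergence `Pⁿ → P^∞` against the Hilbert–Schmidt fields `t ↦ 𝟙_S(t) · (x ⊗ y)`
gives `∫_S ⟪Pⁿ_t x, y⟫ → ∫_S ⟪P^∞_t x, y⟫` for every measurable `S`. As the `Pⁿ_t` are orthogonal
projections, for a.e. `t` this yields `‖P^∞_t‖ ≤ 1` and, by Fatou's lemma,
`liminf ‖Pⁿ_t x‖² ≤ ⟪P^∞_t x, x⟫`; with (b), `‖P_t x‖² ≤ ⟪P^∞_t x, x⟫`. For `w = P_t x` this reads
`‖w‖² ≤ ⟪P^∞_t w, w⟫ ≤ ‖w‖²`, which forces `P^∞_t w = w`, and then (c) gives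
`P^∞_t x = P^∞_t (P_t x) = P_t x`. All of this is first obtained for `x, y` in a countable dense
set and then extended by continuity.

Fatou's lemma needs `t ↦ ‖Pⁿ_t x‖` to be measurable. It is lower semicontinuous: the functions
`v ∘ g` with `v` bounded continuous are dense in `L₂(g)`, and `v ∘ g` depends continuously on
`g ∈ L²`.
-/

open MeasureTheory Set Filter
open scoped ENNReal

noncomputable section

/-- Lebesgue measure restricted to `(0,1)`. -/
def mu01 : Measure ℝ := volume.restrict (Set.Ioo (0:ℝ) 1)

/-- The Hilbert space `L² = L²((0,1), Lebesgue)`. -/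
abbrev H := Lp ℝ 2 mu01

/-- The closed subspace `L₂(g)` of (a.e.) `σ(g)`-measurable functions in `L²`. -/
abbrev Lg (g : ℝ → ℝ) : Submodule ℝ H :=
  lpMeas ℝ ℝ (MeasurableSpace.comap g Real.measurableSpace) 2 mu01

/-- The orthogonal projection `pr_g` of `L²` onto `L₂(g)`, as an operator on `L²`. -/
def projOp (g : ℝ → ℝ) (hg : Measurable g) : H →L[ℝ] H :=
  haveI : Fact (MeasurableSpace.comap g Real.measurableSpace ≤ Real.measurableSpace) :=
    ⟨hg.comap_le⟩
  (Lg g).subtypeL.comp (Lg g).orthogonalProjectionOnto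

open scoped RealInnerProductSpace Topology BoundedContinuousFunction NNReal

section InnerProductSpace

variable {E : Type*} [NormedAddCommGroup E] [InnerProductSpace ℝ E]

theorem inner_starProjection_of_mem {K : Submodule ℝ E} [K.HasOrthogonalProjection] {φ : E}
    (hφ : φ ∈ K) (h : E) : ⟪K.starProjection h, φ⟫ = ⟪h, φ⟫ := by
  rw [K.inner_starProjection_left_eq_right, K.starProjection_eq_self_iff.2 hφ]

theorem eventually_lt_norm_starProjection {ι : Type*} {l : Filter ι} {K : ι → Submodule ℝ E}
    [∀ i, (K i).HasOrthogonalProjection] {K₀ : Submodule ℝ E} [K₀.HasOrthogonalProjection]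
    {D : Set E} (hD : (K₀ : Set E) ⊆ closure D)
    (happrox : ∀ φ ∈ D, ∃ φ' : ι → E, (∀ᶠ i in l, φ' i ∈ K i) ∧ Tendsto φ' l (𝓝 φ))
    (h : E) {c : ℝ} (hc : c < ‖K₀.starProjection h‖) :
    ∀ᶠ i in l, c < ‖(K i).starProjection h‖ := by
  rcases lt_or_ge c 0 with hc0 | hc0
  · exact Eventually.of_forall fun i => hc0.trans_le (norm_nonneg _)
  -- `⟪h, φ⟫ > c ‖φ‖` for some `φ ∈ K i` forces `‖pr_{K i} h‖ > c`, as `⟪h, φ⟫ = ⟪pr_{K i} h, φ⟫`.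
  set F : E → ℝ := fun φ => ⟪h, φ⟫ - c * ‖φ‖ with hF
  have hFcont : Continuous F := by fun_prop
  set p := K₀.starProjection h
  have hFp : 0 < F p := by
    have : ⟪h, p⟫ = ‖p‖ ^ 2 := by
      rw [← real_inner_self_eq_norm_sq, inner_starProjection_of_mem (K₀.starProjection_apply_mem h)]
    simp only [hF, this]
    nlinarith [norm_nonneg p]
  obtain ⟨φ, hφpos, hφD⟩ := mem_closure_iff.1 (hD (K₀.starProjection_apply_mem h))
    {φ | 0 < F φ} (isOpen_lt continuous_const hFcont) hFp
  obtain ⟨φ', hφ'K, hφ'⟩ := happrox φ hφD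
  filter_upwards [hφ'K, (hFcont.tendsto φ).comp hφ' |>.eventually (eventually_gt_nhds hφpos)]
    with i hi hFi
  have hinner : ⟪h, φ' i⟫ ≤ ‖(K i).starProjection h‖ * ‖φ' i‖ := by
    rw [← inner_starProjection_of_mem hi]
    exact real_inner_le_norm _ _
  have : c * ‖φ' i‖ < ‖(K i).starProjection h‖ * ‖φ' i‖ := by
    simp only [Function.comp, hF] at hFi; linarith
  exact lt_of_mul_lt_mul_right this (norm_nonneg _)

theorem eq_of_norm_le_of_sq_norm_le_inner {a w : E} (ha : ‖a‖ ≤ ‖w‖) (h : ‖w‖ ^ 2 ≤ ⟪a, w⟫) :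
    a = w := by
  have : ‖a - w‖ ^ 2 ≤ 0 := by
    rw [norm_sub_sq_real]
    nlinarith [norm_nonneg a, norm_nonneg w]
  exact sub_eq_zero.1 (norm_eq_zero.1 (by nlinarith [norm_nonneg (a - w)]))

theorem eq_starProjection_of_dense {K : Submodule ℝ E} [K.HasOrthogonalProjection]
    {Q : E →L[ℝ] E} {D : Set E} (hD : Dense D)
    (hQ : ∀ x ∈ D, ∀ y ∈ D, ⟪Q x, y⟫ ≤ ‖x‖ * ‖y‖)
    (hlow : ∀ x ∈ D, ‖K.starProjection x‖ ^ 2 ≤ ⟪Q x, x⟫)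
    (hQP : ∀ x ∈ D, Q (K.starProjection x) = Q x) : Q = K.starProjection := by
  have hQ' : ∀ x y, ⟪Q x, y⟫ ≤ ‖x‖ * ‖y‖ := fun x y =>
    (hD.prod hD).induction (P := fun p : E × E => ⟪Q p.1, p.2⟫ ≤ ‖p.1‖ * ‖p.2‖)
      (fun p hp => hQ _ hp.1 _ hp.2) (isClosed_le (by fun_prop) (by fun_prop)) (x, y)
  have hlow' : ∀ x, ‖K.starProjection x‖ ^ 2 ≤ ⟪Q x, x⟫ :=
    hD.induction hlow (isClosed_le (by fun_prop) (by fun_prop))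
  have hQP' : ∀ x, Q (K.starProjection x) = Q x :=
    hD.induction hQP (isClosed_eq (by fun_prop) (by fun_prop))
  ext x
  set w := K.starProjection x
  have hnorm : ‖Q w‖ ≤ ‖w‖ := by
    have := hQ' w (Q w)
    rw [real_inner_self_eq_norm_sq] at this
    nlinarith [norm_nonneg w, norm_nonneg (Q w)]
  have hw : ‖w‖ ^ 2 ≤ ⟪Q w, w⟫ := by
    simpa [w, K.starProjection_eq_self_iff.2 (K.starProjection_apply_mem x)] using hlow' w
  rw [← hQP' x, eq_of_norm_le_of_sq_norm_le_inner hnorm hw]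

end InnerProductSpace

theorem sq_le_of_le_liminf {a : ℕ → ℝ} {b c C : ℝ} (ha₀ : ∀ n, 0 ≤ a n) (haC : ∀ n, a n ≤ C)
    (hb₀ : 0 ≤ b) (hc₀ : 0 ≤ c) (hb : b ≤ liminf a atTop)
    (hc : liminf (fun n => ENNReal.ofReal (a n ^ 2)) atTop ≤ ENNReal.ofReal c) : b ^ 2 ≤ c := by
  have hmap : ENNReal.ofReal (liminf a atTop) ^ 2 =
      liminf (fun n => ENNReal.ofReal (a n ^ 2)) atTop := by
    have := Monotone.map_liminf_of_continuousAt (f := fun r => ENNReal.ofReal r ^ 2)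
      (fun r s hrs => pow_le_pow_left' (ENNReal.ofReal_le_ofReal hrs) 2) a
      ((ENNReal.continuous_pow 2).comp ENNReal.continuous_ofReal).continuousAt
      (isCoboundedUnder_ge_of_le atTop haC) (isBoundedUnder_of ⟨0, ha₀⟩)
    simpa only [Function.comp_def, ENNReal.ofReal_pow (ha₀ _)] using this
  rw [← ENNReal.ofReal_le_ofReal_iff hc₀, ENNReal.ofReal_pow hb₀]
  calc ENNReal.ofReal b ^ 2 ≤ ENNReal.ofReal (liminf a atTop) ^ 2 := by gcongr
    _ ≤ ENNReal.ofReal c := hmap ▸ hc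

theorem LowerSemicontinuousOn.aemeasurable_restrict {X β : Type*} [TopologicalSpace X]
    [MeasurableSpace X] [OpensMeasurableSpace X] [TopologicalSpace β] [MeasurableSpace β]
    [BorelSpace β] [LinearOrder β] [OrderTopology β] [SecondCountableTopology β] {f : X → β}
    {s : Set X} (hf : LowerSemicontinuousOn f s) (hs : MeasurableSet s) {μ : Measure X} :
    AEMeasurable f (μ.restrict s) := by
  rw [aemeasurable_restrict_iff_comap_subtype hs]
  exact (lowerSemicontinuous_restrict_iff.2 hf).measurable.aemeasurable

theorem AEMeasurable.liminf {α β : Type*} [MeasurableSpace α] {μ : Measure α}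
    [ConditionallyCompleteLinearOrder β] [TopologicalSpace β] [OrderTopology β]
    [SecondCountableTopology β] [MeasurableSpace β] [BorelSpace β] {f : ℕ → α → β}
    (hf : ∀ n, AEMeasurable (f n) μ) :
    AEMeasurable (fun x => liminf (fun n => f n x) atTop) μ := by
  refine (Measurable.liminf fun n => (hf n).measurable_mk).aemeasurable.congr ?_
  filter_upwards [ae_all_iff.2 fun n => (hf n).ae_eq_mk] with x hx
  simp [hx]

theorem measurable_of_hasSum {α β γ : Type*} [MeasurableSpace α] [Countable γ] [AddCommMonoid β]
    [TopologicalSpace β] [TopologicalSpace.PseudoMetrizableSpace β] [MeasurableSpace β]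
    [BorelSpace β] [MeasurableAdd₂ β] {f : γ → α → β} (hf : ∀ k, Measurable (f k)) {g : α → β}
    (hg : ∀ x, HasSum (fun k => f k x) (g x)) : Measurable g :=
  measurable_of_tendsto_metrizable' atTop (fun s => Finset.measurable_sum s fun k _ => hf k)
    (tendsto_pi_nhds.2 fun x => by simpa [Finset.sum_apply] using (hg x).comp tendsto_id)

section WeakLimit

variable {α : Type*} [MeasurableSpace α] {μ : Measure α} {u : ℕ → α → ℝ} {v : α → ℝ}

theorem ae_le_of_tendsto_setIntegral [IsFiniteMeasure μ] {C : ℝ} (hu : ∀ n x, |u n x| ≤ C)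
    (hv : Integrable v μ)
    (hlim : ∀ s, MeasurableSet s →
      Tendsto (fun n => ∫ x in s, u n x ∂μ) atTop (𝓝 (∫ x in s, v x ∂μ))) :
    ∀ᵐ x ∂μ, v x ≤ C := by
  refine ae_le_of_forall_setIntegral_le hv (integrable_const C) fun s hs _ =>
    le_of_tendsto' (hlim s hs) fun n => ?_
  calc ∫ x in s, u n x ∂μ ≤ ‖∫ x in s, u n x ∂μ‖ := Real.le_norm_self _
    _ ≤ C * μ.real s := norm_setIntegral_le_of_norm_le_const (measure_lt_top _ _) fun x _ => hu n x
    _ = ∫ _ in s, C ∂μ := by simp [mul_comm]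

theorem ae_nonneg_of_tendsto_setIntegral (hu : ∀ n x, 0 ≤ u n x) (hv : Integrable v μ)
    (hlim : ∀ s, MeasurableSet s →
      Tendsto (fun n => ∫ x in s, u n x ∂μ) atTop (𝓝 (∫ x in s, v x ∂μ))) :
    0 ≤ᵐ[μ] v :=
  ae_nonneg_of_forall_setIntegral_nonneg hv fun s hs _ =>
    ge_of_tendsto' (hlim s hs) fun n => integral_nonneg (hu n)

theorem ae_liminf_ofReal_le_of_tendsto_setIntegral [SigmaFinite μ] (hu : ∀ n, Integrable (u n) μ)
    (hu₀ : ∀ n x, 0 ≤ u n x) (hv : Integrable v μ)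
    (hlim : ∀ s, MeasurableSet s →
      Tendsto (fun n => ∫ x in s, u n x ∂μ) atTop (𝓝 (∫ x in s, v x ∂μ))) :
    ∀ᵐ x ∂μ, liminf (fun n => ENNReal.ofReal (u n x)) atTop ≤ ENNReal.ofReal (v x) := by
  have hv₀ := ae_nonneg_of_tendsto_setIntegral hu₀ hv hlim
  refine ae_le_of_forall_setLIntegral_le_of_sigmaFinite₀
    (AEMeasurable.liminf fun n => (hu n).1.aemeasurable.ennreal_ofReal) fun s hs _ => ?_
  have hlim' : Tendsto (fun n => ∫⁻ x in s, ENNReal.ofReal (u n x) ∂μ) atTop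
      (𝓝 (∫⁻ x in s, ENNReal.ofReal (v x) ∂μ)) := by
    simp_rw [← ofReal_integral_eq_lintegral_ofReal (hu _).restrict
      (ae_restrict_of_ae (Eventually.of_forall (hu₀ _))),
      ← ofReal_integral_eq_lintegral_ofReal hv.restrict (ae_restrict_of_ae hv₀)]
    exact (ENNReal.continuous_ofReal.tendsto _).comp (hlim s hs)
  calc ∫⁻ x in s, liminf (fun n => ENNReal.ofReal (u n x)) atTop ∂μ
      ≤ liminf (fun n => ∫⁻ x in s, ENNReal.ofReal (u n x) ∂μ) atTop :=
        lintegral_liminf_le' fun n => (hu n).1.aemeasurable.ennreal_ofReal.restrict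
    _ = ∫⁻ x in s, ENNReal.ofReal (v x) ∂μ := hlim'.liminf_eq

end WeakLimit

section Lp

variable {α X F : Type*} [MeasurableSpace α] {μ : Measure α}
  [PseudoMetricSpace X] [MeasurableSpace X] [OpensMeasurableSpace X]
  [SecondCountableTopology X] [NormedAddCommGroup F]

theorem unifIntegrable_of_norm_le {ι β : Type*} [NormedAddCommGroup β] {p : ℝ≥0∞} (hp : 1 ≤ p)
    (hp' : p ≠ ∞) {f : ι → α → β} (hf : ∀ i, AEStronglyMeasurable (f i) μ) {C : ℝ}
    (hC : ∀ i x, ‖f i x‖ ≤ C) : UnifIntegrable f p μ := by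
  refine unifIntegrable_of hp hp' hf fun ε hε => ⟨C.toNNReal + 1, fun i => ?_⟩
  have : {x | C.toNNReal + 1 ≤ ‖f i x‖₊} = ∅ := by
    ext x
    simp only [mem_ofPred_eq, mem_empty_iff_false, iff_false, not_le, ← NNReal.coe_lt_coe]
    push_cast
    linarith [hC i x, Real.le_coe_toNNReal C]
  simp [this]

theorem memLp_boundedContinuous_comp (v : X →ᵇ F) {g : α → X} (hg : AEMeasurable g μ)
    (p : ℝ≥0∞) [IsFiniteMeasure μ] : MemLp (v ∘ g) p μ :=
  MemLp.of_bound (v.continuous.comp_aestronglyMeasurable hg.aestronglyMeasurable) ‖v‖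
    (ae_of_all _ fun _ => v.norm_coe_le_norm _)

theorem tendsto_eLpNorm_comp_sub_comp [IsFiniteMeasure μ] (v : X →ᵇ F) {p : ℝ≥0∞} (hp : 1 ≤ p)
    (hp' : p ≠ ∞) {ι : Type*} {l : Filter ι} [l.IsCountablyGenerated] {g : ι → α → X} {g₀ : α → X}
    (hg : ∀ i, AEMeasurable (g i) μ) (hg₀ : AEMeasurable g₀ μ) (hconv : TendstoInMeasure μ g l g₀) :
    Tendsto (fun i => eLpNorm (v ∘ g i - v ∘ g₀) p μ) l (𝓝 0) := by
  refine tendsto_of_subseq_tendsto fun ns hns => ?_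
  obtain ⟨ms, -, hae⟩ := (hconv.comp hns).exists_seq_tendsto_ae
  refine ⟨ms, tendsto_Lp_finite_of_tendsto_ae hp hp'
    (fun n => (memLp_boundedContinuous_comp v (hg _) p).1) (memLp_boundedContinuous_comp v hg₀ p)
    (unifIntegrable_of_norm_le hp hp' (fun n => (memLp_boundedContinuous_comp v (hg _) p).1)
      (fun n x => v.norm_coe_le_norm _)) ?_⟩
  filter_upwards [hae] with x hx
  exact (v.continuous.tendsto _).comp hx

theorem exists_boundedContinuous_eLpNorm_comp_sub_le [IsFiniteMeasure μ] {g : α → ℝ}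
    (hg : Measurable g) {φ : α → ℝ} {p : ℝ≥0∞} (hp : p ≠ ∞)
    (hφm : AEStronglyMeasurable[MeasurableSpace.comap g Real.measurableSpace] φ μ)
    (hφ : MemLp φ p μ) {ε : ℝ≥0∞} (hε : ε ≠ 0) :
    ∃ v : ℝ →ᵇ ℝ, eLpNorm (v ∘ g - φ) p μ ≤ ε := by
  obtain ⟨φ₀, hφ₀m, hφφ₀⟩ := hφm
  obtain ⟨w, hwm, rfl⟩ := hφ₀m.exists_eq_measurable_comp
  have hw : MemLp w p (μ.map g) := by
    rw [memLp_map_measure_iff hwm.aestronglyMeasurable hg.aemeasurable]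
    exact hφ.ae_eq hφφ₀
  obtain ⟨v, hv, -⟩ := hw.exists_boundedContinuous_eLpNorm_sub_le hp hε
  refine ⟨v, ?_⟩
  calc eLpNorm (v ∘ g - φ) p μ = eLpNorm ((⇑v - w) ∘ g) p μ :=
        eLpNorm_congr_ae (hφφ₀.mono fun x hx => by simp [hx])
    _ = eLpNorm (⇑v - w) p (μ.map g) :=
        (eLpNorm_map_measure ((v.continuous.measurable.sub hwm.measurable).aestronglyMeasurable)
          hg.aemeasurable).symm
    _ ≤ ε := by rwa [← eLpNorm_neg, neg_sub]

end Lp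

section HilbertSchmidt

variable {E : Type*} [NormedAddCommGroup E] [InnerProductSpace ℝ E] {ι : Type*}
  (e : HilbertBasis ι ℝ E)

theorem HilbertBasis.enorm_sq_eq_tsum (x : E) : ‖x‖ₑ ^ 2 = ∑' i, ‖⟪e i, x⟫‖ₑ ^ 2 := by
  have hsq : ∀ r : ℝ, ‖r‖ₑ ^ 2 = ENNReal.ofReal (r ^ 2) := fun r => by
    rw [← ofReal_norm, ← ENNReal.ofReal_pow (norm_nonneg _), Real.norm_eq_abs, sq_abs]
  have hx : ‖x‖ₑ ^ 2 = ENNReal.ofReal (‖x‖ ^ 2) := by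
    rw [← ofReal_norm, ENNReal.ofReal_pow (norm_nonneg _)]
  have hsum : HasSum (fun i => ⟪e i, x⟫ ^ 2) (‖x‖ ^ 2) := by
    simpa only [real_inner_comm (e _) x, ← sq, real_inner_self_eq_norm_sq] using
      e.hasSum_inner_mul_inner x x
  simp only [hx, hsq, ← hsum.tsum_eq]
  exact ENNReal.ofReal_tsum_of_nonneg (fun i => sq_nonneg _) hsum.summable

theorem HilbertBasis.hasSum_inner_mul_inner_apply [CompleteSpace E] (Q : E →L[ℝ] E) (x y : E) :
    HasSum (fun i => ⟪e i, x⟫ * ⟪Q (e i), y⟫) ⟪Q x, y⟫ := by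
  simpa [ContinuousLinearMap.adjoint_inner_left, real_inner_comm y, mul_comm] using
    e.hasSum_inner_mul_inner (Q.adjoint y) x

theorem HilbertBasis.enorm_inner_apply_sq_le [CompleteSpace E] (Q : E →L[ℝ] E) (x y : E) :
    ‖⟪Q x, y⟫‖ₑ ^ 2 ≤ ‖x‖ₑ ^ 2 * ‖y‖ₑ ^ 2 * ∑' i, ‖Q (e i)‖ₑ ^ 2 := by
  have hinner : ∀ a b : E, ‖⟪a, b⟫‖ₑ ≤ ‖a‖ₑ * ‖b‖ₑ := fun a b => by
    simpa only [enorm_eq_nnnorm, ← ENNReal.coe_mul] using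
      ENNReal.coe_le_coe.2 (nnnorm_inner_le_nnnorm a b)
  have hadj : ‖Q.adjoint y‖ₑ ^ 2 ≤ ‖y‖ₑ ^ 2 * ∑' i, ‖Q (e i)‖ₑ ^ 2 := by
    rw [e.enorm_sq_eq_tsum, ← ENNReal.tsum_mul_left]
    refine ENNReal.tsum_le_tsum fun i => ?_
    rw [ContinuousLinearMap.adjoint_inner_right, mul_comm, ← mul_pow]
    exact pow_le_pow_left' (hinner _ _) 2
  calc ‖⟪Q x, y⟫‖ₑ ^ 2 = ‖⟪x, Q.adjoint y⟫‖ₑ ^ 2 := by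
        rw [ContinuousLinearMap.adjoint_inner_right]
    _ ≤ ‖x‖ₑ ^ 2 * ‖Q.adjoint y‖ₑ ^ 2 := by
        rw [← mul_pow]; exact pow_le_pow_left' (hinner _ _) 2
    _ ≤ ‖x‖ₑ ^ 2 * ‖y‖ₑ ^ 2 * ∑' i, ‖Q (e i)‖ₑ ^ 2 := by
        rw [mul_assoc]; gcongr

variable {α : Type*} [MeasurableSpace α] {μ : Measure α} [CompleteSpace E]

theorem HilbertBasis.measurable_inner_apply [Countable ι] {Q : α → E →L[ℝ] E}
    (hQ : ∀ i j, Measurable fun t => ⟪Q t (e i), e j⟫) (x y : E) :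
    Measurable fun t => ⟪Q t x, y⟫ :=
  measurable_of_hasSum
    (fun i => (measurable_of_hasSum (fun j => (hQ i j).mul_const _)
      fun t => e.hasSum_inner_mul_inner (Q t (e i)) y).const_mul _)
    fun t => e.hasSum_inner_mul_inner_apply (Q t) x y

theorem HilbertBasis.integrable_inner_apply [IsFiniteMeasure μ] [Countable ι]
    {Q : α → E →L[ℝ] E} (hQ : ∀ i j, Measurable fun t => ⟪Q t (e i), e j⟫)
    (hHS : ∫⁻ t, ∑' i, ‖Q t (e i)‖ₑ ^ 2 ∂μ < ∞) (x y : E) :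
    Integrable (fun t => ⟪Q t x, y⟫) μ := by
  have hm := e.measurable_inner_apply hQ x y
  refine ((memLp_two_iff_integrable_sq hm.aestronglyMeasurable).2
    ⟨(hm.pow_const 2).aestronglyMeasurable, ?_⟩).integrable one_le_two
  calc ∫⁻ t, ‖⟪Q t x, y⟫ ^ 2‖ₑ ∂μ
      ≤ ∫⁻ t, ‖x‖ₑ ^ 2 * ‖y‖ₑ ^ 2 * ∑' i, ‖Q t (e i)‖ₑ ^ 2 ∂μ :=
        lintegral_mono fun t => by rw [enorm_pow]; exact e.enorm_inner_apply_sq_le _ x y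
    _ = ‖x‖ₑ ^ 2 * ‖y‖ₑ ^ 2 * ∫⁻ t, ∑' i, ‖Q t (e i)‖ₑ ^ 2 ∂μ :=
        lintegral_const_mul' _ _ (by finiteness)
    _ < ∞ := ENNReal.mul_lt_top (by finiteness) hHS

theorem tendsto_setIntegral_inner_of_tendsto_integral_tsum [IsFiniteMeasure μ]
    {Pn : ℕ → α → E →L[ℝ] E} {Q : α → E →L[ℝ] E}
    (hlim : ∀ A : α → E →L[ℝ] E,
      (∀ i j, Measurable fun t => ⟪A t (e i), e j⟫) →
      (∫⁻ t, ∑' i, (‖A t (e i)‖₊ : ℝ≥0∞) ^ 2 ∂μ) < ∞ →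
      Tendsto (fun n => ∫ t, ∑' i, ⟪Pn n t (e i), A t (e i)⟫ ∂μ) atTop
        (𝓝 (∫ t, ∑' i, ⟪Q t (e i), A t (e i)⟫ ∂μ)))
    (x y : E) {s : Set α} (hs : MeasurableSet s) :
    Tendsto (fun n => ∫ t in s, ⟪Pn n t x, y⟫ ∂μ) atTop (𝓝 (∫ t in s, ⟪Q t x, y⟫ ∂μ)) := by
  set A : α → E →L[ℝ] E := s.indicator fun _ => InnerProductSpace.rankOne ℝ y x
  have hA : ∀ (R : α → E →L[ℝ] E) t,
      ∑' i, ⟪R t (e i), A t (e i)⟫ = s.indicator (fun t => ⟪R t x, y⟫) t := fun R t => by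
    by_cases ht : t ∈ s
    · simp only [A, indicator_of_mem ht, InnerProductSpace.rankOne_apply, real_inner_smul_right,
        real_inner_comm (e _) x]
      exact (e.hasSum_inner_mul_inner_apply (R t) x y).tsum_eq
    · simp [A, ht]
  have hmeas : ∀ i j, Measurable fun t => ⟪A t (e i), e j⟫ := fun i j => by
    have : (fun t => ⟪A t (e i), e j⟫) =
        s.indicator fun _ => ⟪InnerProductSpace.rankOne ℝ y x (e i), e j⟫ := by
      ext t; by_cases ht : t ∈ s <;> simp [A, ht]
    rw [this]
    exact measurable_const.indicator hs
  have hHS : ∀ t, ∑' i, (‖A t (e i)‖₊ : ℝ≥0∞) ^ 2 ≤ ‖x‖ₑ ^ 2 * ‖y‖ₑ ^ 2 := fun t => by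
    by_cases ht : t ∈ s
    · simp only [A, indicator_of_mem ht, InnerProductSpace.rankOne_apply, ← enorm_eq_nnnorm,
        enorm_smul, mul_pow, ENNReal.tsum_mul_right, real_inner_comm (e _) x,
        ← e.enorm_sq_eq_tsum, le_rfl]
    · simp [A, ht]
  have := hlim A hmeas
    ((lintegral_mono hHS).trans_lt (by simp [ENNReal.mul_lt_top, measure_lt_top]))
  simpa only [fun n => hA (Pn n), hA Q, integral_indicator hs] using this

end HilbertSchmidt

instance : IsFiniteMeasure mu01 := by
  rw [mu01]
  infer_instance

theorem projOp_eq_starProjection (g : ℝ → ℝ) (hg : Measurable g) :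
    haveI : Fact (MeasurableSpace.comap g Real.measurableSpace ≤ Real.measurableSpace) :=
      ⟨hg.comap_le⟩
    projOp g hg = (Lg g).starProjection :=
  rfl

def compToLp (g : ℝ → ℝ) (hg : Measurable g) (v : ℝ →ᵇ ℝ) : H :=
  (memLp_boundedContinuous_comp v hg.aemeasurable 2).toLp (v ∘ g)

theorem compToLp_mem_Lg {g : ℝ → ℝ} (hg : Measurable g) (v : ℝ →ᵇ ℝ) : compToLp g hg v ∈ Lg g :=
  mem_lpMeas_iff_aestronglyMeasurable.2
    ⟨v ∘ g, (v.continuous.measurable.comp (comap_measurable g)).stronglyMeasurable,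
      MemLp.coeFn_toLp _⟩

theorem Lg_subset_closure_range_compToLp {g : ℝ → ℝ} (hg : Measurable g) :
    (Lg g : Set H) ⊆ closure (range (compToLp g hg)) := by
  intro φ hφ
  rw [Metric.mem_closure_iff]
  intro ε hε
  obtain ⟨v, hv⟩ := exists_boundedContinuous_eLpNorm_comp_sub_le hg ENNReal.ofNat_ne_top
    (mem_lpMeas_iff_aestronglyMeasurable.1 hφ) (Lp.memLp φ) (ε := ENNReal.ofReal (ε / 2))
    (by simp [hε])
  refine ⟨compToLp g hg v, mem_range_self v, ?_⟩
  rw [dist_comm, Lp.dist_def, compToLp,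
    eLpNorm_congr_ae ((MemLp.coeFn_toLp _).sub EventuallyEq.rfl)]
  exact (ENNReal.toReal_le_of_le_ofReal (by positivity) hv).trans_lt (by linarith)

theorem tendsto_compToLp {ι : Type*} {l : Filter ι} [l.IsCountablyGenerated] {g : ι → ℝ → ℝ}
    {g₀ : ℝ → ℝ} (hg : ∀ i, Measurable (g i)) (hg₀ : Measurable g₀)
    (hconv : Tendsto (fun i => eLpNorm (g i - g₀) 2 mu01) l (𝓝 0)) (v : ℝ →ᵇ ℝ) :
    Tendsto (fun i => compToLp (g i) (hg i) v) l (𝓝 (compToLp g₀ hg₀ v)) := by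
  unfold compToLp
  rw [Lp.tendsto_Lp_iff_tendsto_eLpNorm'']
  refine tendsto_eLpNorm_comp_sub_comp v one_le_two ENNReal.ofNat_ne_top
    (fun i => (hg i).aemeasurable) hg₀.aemeasurable ?_
  exact tendstoInMeasure_of_tendsto_eLpNorm two_ne_zero
    (fun i => (hg i).aestronglyMeasurable) hg₀.aestronglyMeasurable hconv

theorem lowerSemicontinuousOn_norm_projOp {X : Type*} [TopologicalSpace X]
    [FirstCountableTopology X] {s : Set X} {g : X → ℝ → ℝ} (hg : ∀ t, Measurable (g t))
    (hcont : ∀ t₀ ∈ s, Tendsto (fun t => eLpNorm (fun u => g t u - g t₀ u) 2 mu01) (𝓝[s] t₀)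
      (𝓝 0)) (h : H) :
    LowerSemicontinuousOn (fun t => ‖projOp (g t) (hg t) h‖) s := by
  intro t₀ ht₀ c hc
  have := fun t => Fact.mk (hg t).comap_le
  simp only [projOp_eq_starProjection] at hc ⊢
  exact eventually_lt_norm_starProjection (Lg_subset_closure_range_compToLp (hg t₀))
    (by
      rintro _ ⟨v, rfl⟩
      exact ⟨fun t => compToLp (g t) (hg t) v, Eventually.of_forall fun t => compToLp_mem_Lg _ v,
        tendsto_compToLp hg (hg t₀) (hcont t₀ ht₀) v⟩) h hc

theorem norm_projOp_apply_le (g : ℝ → ℝ) (hg : Measurable g) (x : H) :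
    ‖projOp g hg x‖ ≤ ‖x‖ := by
  have := Fact.mk hg.comap_le
  exact (Lg g).norm_starProjection_apply_le x

theorem abs_inner_projOp_apply_le (g : ℝ → ℝ) (hg : Measurable g) (x y : H) :
    |⟪projOp g hg x, y⟫| ≤ ‖x‖ * ‖y‖ :=
  (abs_real_inner_le_norm _ _).trans
    (mul_le_mul_of_nonneg_right (norm_projOp_apply_le g hg x) (norm_nonneg y))

theorem inner_projOp_apply_self (g : ℝ → ℝ) (hg : Measurable g) (x : H) :
    ⟪projOp g hg x, x⟫ = ‖projOp g hg x‖ ^ 2 := by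
  have := Fact.mk hg.comap_le
  rw [projOp_eq_starProjection]
  simpa using (Lg g).re_inner_starProjection_eq_normSq x

theorem integrable_sq_norm_projOp {s : Set ℝ} (hs : MeasurableSet s)
    [IsFiniteMeasure (volume.restrict s)] {g : ℝ → ℝ → ℝ} (hg : ∀ t, Measurable (g t))
    (hcont : ∀ t₀ ∈ s, Tendsto (fun t => eLpNorm (fun u => g t u - g t₀ u) 2 mu01) (𝓝[s] t₀)
      (𝓝 0)) (x : H) :
    Integrable (fun t => ‖projOp (g t) (hg t) x‖ ^ 2) (volume.restrict s) := by
  refine Integrable.of_bound ?_ (‖x‖ ^ 2) (ae_of_all _ fun t => ?_)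
  · exact (((lowerSemicontinuousOn_norm_projOp hg hcont x).aemeasurable_restrict hs).pow_const
      2).aestronglyMeasurable
  · simpa [abs_of_nonneg (norm_nonneg _)] using
      pow_le_pow_left₀ (norm_nonneg _) (norm_projOp_apply_le _ _ x) 2

theorem stmt17_general (T : ℝ)
    (f : ℝ → ℝ → ℝ) (fn : ℕ → ℝ → ℝ → ℝ)
    (hfmeas : ∀ t, Measurable (f t))
    (hfnmeas : ∀ n t, Measurable (fn n t))
    (hfncont : ∀ n, ∀ t₀ ∈ Set.Icc (0:ℝ) T,
      Tendsto (fun t => eLpNorm (fun u => fn n t u - fn n t₀ u) 2 mu01)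
        (nhdsWithin t₀ (Set.Icc (0:ℝ) T)) (nhds 0))
    (e : HilbertBasis ℕ ℝ H)
    (Pinf : ℝ → H →L[ℝ] H)
    (hPinfMeas : ∀ i j : ℕ, Measurable fun t => (inner ℝ (Pinf t (e i)) (e j) : ℝ))
    (hPinfHS : (∫⁻ t in Set.Icc (0:ℝ) T, ∑' i : ℕ, (‖Pinf t (e i)‖₊ : ℝ≥0∞) ^ 2) < ∞)
    (ha : ∀ A : ℝ → H →L[ℝ] H,
      (∀ i j : ℕ, Measurable fun t => (inner ℝ (A t (e i)) (e j) : ℝ)) →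
      (∫⁻ t in Set.Icc (0:ℝ) T, ∑' i : ℕ, (‖A t (e i)‖₊ : ℝ≥0∞) ^ 2) < ∞ →
      Tendsto
        (fun n => ∫ t in Set.Icc (0:ℝ) T,
          ∑' i : ℕ, (inner ℝ (projOp (fn n t) (hfnmeas n t) (e i)) (A t (e i)) : ℝ))
        atTop
        (nhds (∫ t in Set.Icc (0:ℝ) T,
          ∑' i : ℕ, (inner ℝ (Pinf t (e i)) (A t (e i)) : ℝ))))
    (hb : ∀ᵐ t ∂(volume.restrict (Set.Icc (0:ℝ) T)), ∀ h : H,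
      ‖projOp (f t) (hfmeas t) h‖ ≤
        liminf (fun n => ‖projOp (fn n t) (hfnmeas n t) h‖) atTop)
    (hc : ∀ h : H, ∀ᵐ t ∂(volume.restrict (Set.Icc (0:ℝ) T)),
      Pinf t (projOp (f t) (hfmeas t) h) = Pinf t h) :
    ∀ᵐ t ∂(volume.restrict (Set.Icc (0:ℝ) T)), Pinf t = projOp (f t) (hfmeas t) := by
  have hlim := tendsto_setIntegral_inner_of_tendsto_integral_tsum e ha
  have hint := e.integrable_inner_apply hPinfMeas hPinfHS
  have : Fact ((2 : ℝ≥0∞) ≠ ∞) := ⟨ENNReal.ofNat_ne_top⟩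
  obtain ⟨D, hDc, hD⟩ := TopologicalSpace.exists_countable_dense H
  have hbound : ∀ᵐ t ∂(volume.restrict (Icc 0 T)), ∀ x ∈ D, ∀ y ∈ D,
      ⟪Pinf t x, y⟫ ≤ ‖x‖ * ‖y‖ :=
    (ae_ball_iff hDc).2 fun x _ => (ae_ball_iff hDc).2 fun y _ =>
      ae_le_of_tendsto_setIntegral (fun n t => abs_inner_projOp_apply_le _ _ x y) (hint x y)
        fun s hs => hlim x y hs
  have hpos : ∀ᵐ t ∂(volume.restrict (Icc 0 T)), ∀ x ∈ D, 0 ≤ ⟪Pinf t x, x⟫ :=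
    (ae_ball_iff hDc).2 fun x _ => ae_nonneg_of_tendsto_setIntegral
      (fun n t => by rw [inner_projOp_apply_self]; positivity) (hint x x) fun s hs => hlim x x hs
  have hfatou : ∀ᵐ t ∂(volume.restrict (Icc 0 T)), ∀ x ∈ D,
      liminf (fun n => ENNReal.ofReal (‖projOp (fn n t) (hfnmeas n t) x‖ ^ 2)) atTop ≤
        ENNReal.ofReal ⟪Pinf t x, x⟫ :=
    (ae_ball_iff hDc).2 fun x _ => ae_liminf_ofReal_le_of_tendsto_setIntegral
      (fun n => integrable_sq_norm_projOp measurableSet_Icc (hfnmeas n) (hfncont n) x)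
      (fun n t => by positivity) (hint x x)
      fun s hs => by simpa only [inner_projOp_apply_self] using hlim x x hs
  have hcD : ∀ᵐ t ∂(volume.restrict (Icc 0 T)), ∀ x ∈ D,
      Pinf t (projOp (f t) (hfmeas t) x) = Pinf t x :=
    (ae_ball_iff hDc).2 fun x _ => hc x
  filter_upwards [hbound, hpos, hfatou, hcD, hb] with t hbound hpos hfatou hcD hb
  have := Fact.mk (hfmeas t).comap_le
  exact eq_starProjection_of_dense hD hbound
    (fun x hx => sq_le_of_le_liminf (fun n => norm_nonneg _) (fun n => norm_projOp_apply_le _ _ x)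
      (norm_nonneg _) (hpos x hx) (hb x) (hfatou x hx)) hcD

/-- identification of the limiting projection.  Let
`f, fⁿ ∈ C([0,T], L₂↑)` (given by measurable, nondecreasing-in-`u` representatives),
`P_t = pr_{f_t}`, `Pⁿ_t = pr_{fⁿ_t}`.  Assume (a) `Pⁿ → P^∞` weakly in
`L²([0,T], HS(L²))` (tested against all Hilbert–Schmidt–valued `A`, with the HS inner
product computed in a Hilbert basis `(eᵢ)`); (b) for a.e. `t` and all `h`,
`‖P_t h‖ ≤ liminf_n ‖Pⁿ_t h‖`; (c) for each `h` and a.e. `t`,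
`P^∞_t (P_t h) = P^∞_t h`.  Then `P^∞ = P` a.e. on `[0,T]`. -/
theorem stmt17 (T : ℝ) (hT : 0 < T)
    (f : ℝ → ℝ → ℝ) (fn : ℕ → ℝ → ℝ → ℝ)
    (hfmono : ∀ t, MonotoneOn (f t) (Set.Ioo (0:ℝ) 1))
    (hfmeas : ∀ t, Measurable (f t))
    (hf2 : ∀ t, MemLp (f t) 2 mu01)
    (hfnmono : ∀ n t, MonotoneOn (fn n t) (Set.Ioo (0:ℝ) 1))
    (hfnmeas : ∀ n t, Measurable (fn n t))
    (hfn2 : ∀ n t, MemLp (fn n t) 2 mu01)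
    (hfcont : ∀ t₀ ∈ Set.Icc (0:ℝ) T,
      Tendsto (fun t => eLpNorm (fun u => f t u - f t₀ u) 2 mu01)
        (nhdsWithin t₀ (Set.Icc (0:ℝ) T)) (nhds 0))
    (hfncont : ∀ n, ∀ t₀ ∈ Set.Icc (0:ℝ) T,
      Tendsto (fun t => eLpNorm (fun u => fn n t u - fn n t₀ u) 2 mu01)
        (nhdsWithin t₀ (Set.Icc (0:ℝ) T)) (nhds 0))
    (e : HilbertBasis ℕ ℝ H)
    (Pinf : ℝ → H →L[ℝ] H)
    (hPinfMeas : ∀ i j : ℕ, Measurable fun t => (inner ℝ (Pinf t (e i)) (e j) : ℝ))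
    (hPinfHS : (∫⁻ t in Set.Icc (0:ℝ) T, ∑' i : ℕ, (‖Pinf t (e i)‖₊ : ℝ≥0∞) ^ 2) < ∞)
    (ha : ∀ A : ℝ → H →L[ℝ] H,
      (∀ i j : ℕ, Measurable fun t => (inner ℝ (A t (e i)) (e j) : ℝ)) →
      (∫⁻ t in Set.Icc (0:ℝ) T, ∑' i : ℕ, (‖A t (e i)‖₊ : ℝ≥0∞) ^ 2) < ∞ →
      Tendsto
        (fun n => ∫ t in Set.Icc (0:ℝ) T,
          ∑' i : ℕ, (inner ℝ (projOp (fn n t) (hfnmeas n t) (e i)) (A t (e i)) : ℝ))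
        atTop
        (nhds (∫ t in Set.Icc (0:ℝ) T,
          ∑' i : ℕ, (inner ℝ (Pinf t (e i)) (A t (e i)) : ℝ))))
    (hb : ∀ᵐ t ∂(volume.restrict (Set.Icc (0:ℝ) T)), ∀ h : H,
      ‖projOp (f t) (hfmeas t) h‖ ≤
        liminf (fun n => ‖projOp (fn n t) (hfnmeas n t) h‖) atTop)
    (hc : ∀ h : H, ∀ᵐ t ∂(volume.restrict (Set.Icc (0:ℝ) T)),
      Pinf t (projOp (f t) (hfmeas t) h) = Pinf t h) :
    ∀ᵐ t ∂(volume.restrict (Set.Icc (0:ℝ) T)), Pinf t = projOp (f t) (hfmeas t) :=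
  stmt17_general T f fn hfmeas hfnmeas hfncont e Pinf hPinfMeas hPinfHS ha hb hc
end
end
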